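/- If {S_n} is a non-increasing sequence of nonnegative bounded self-adjoint operators on a Hilbert space converging strongly to S, and K is a closed subspace, then (S_n)_K converges strongly to S_K. -/

import Mathlib

open ContinuousLinearMap

variable {H : Type*} [NormedAddCommGroup H] [InnerProductSpace ℂ H] [CompleteSpace H]

/-- `W` is the Kreĭn shorted operator of `S` with respect to the closed subspace `K`. -/
def IsShortedOp (S W : H →L[ℂ] H) (K : Submodule ℂ H) : Prop :=
  IsSelfAdjoint W ∧
    ∀ f : H, (inner ℂ (W f) f : ℂ).re = ⨅ φ : Kᗮ, (inner ℂ (S (f + φ)) (f + φ) : ℂ).re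

/-! The form of `(Sₙ)_K` at `f` is an infimum over `φ ∈ Kᗮ` of the forms of `Sₙ` at `f + φ`.
These decrease in `n` to the forms of `S`, and decreasing limits commute with infima, so the forms
of `(Sₙ)_K` decrease to that of `S_K`. Shorting is monotone, so `Dₙ = (Sₙ)_K - S_K` is a decreasing
sequence of positive operators, bounded in norm by `‖D₀‖`, whose forms tend to zero. For positive
`D` one has `‖D f‖² ≤ ‖D‖ ⟪D f, f⟫` (write `D = R²` with `R = √D`), so `Dₙ f → 0`. -/

open Filter Topology

namespace ContinuousLinearMap

open scoped ComplexOrder in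
lemma IsPositive.of_tendsto_apply {E : Type*} [NormedAddCommGroup E] [InnerProductSpace ℂ E]
    {ι : Type*} {l : Filter ι} [l.NeBot] {T : ι → E →L[ℂ] E} {T' : E →L[ℂ] E}
    (hT : ∀ᶠ i in l, (T i).IsPositive) (hlim : ∀ x, Tendsto (fun i => T i x) l (𝓝 (T' x))) :
    T'.IsPositive := by
  have hform : ∀ x, 0 ≤ inner ℂ (T' x) x := fun x =>
    ge_of_tendsto ((hlim x).inner tendsto_const_nhds)
      (hT.mono fun i hi => hi.inner_nonneg_left x)
  refine (isPositive_iff_complex T').mpr fun x => ?_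
  obtain ⟨hre, him⟩ := Complex.nonneg_iff.mp (hform x)
  exact ⟨Complex.ext (by simp) (by simp [him]), hre⟩

lemma le_of_antitone_of_tendsto_apply {E : Type*} [NormedAddCommGroup E] [InnerProductSpace ℂ E]
    {T : ℕ → E →L[ℂ] E} {T' : E →L[ℂ] E} (hT : Antitone T)
    (hlim : ∀ x, Tendsto (fun n => T n x) atTop (𝓝 (T' x))) (n : ℕ) : T' ≤ T n :=
  IsPositive.of_tendsto_apply (T := fun m => T n - T m)
    ((eventually_ge_atTop n).mono fun _ hm => hT hm)
    (fun x => by simpa using (hlim x).const_sub (T n x))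

lemma reApplyInnerSelf_le_of_le {𝕜 E : Type*} [RCLike 𝕜] [NormedAddCommGroup E]
    [InnerProductSpace 𝕜 E] {T T' : E →L[𝕜] E} (h : T ≤ T') (x : E) :
    T.reApplyInnerSelf x ≤ T'.reApplyInnerSelf x := by
  simpa [reApplyInnerSelf_apply, inner_sub_left] using h.re_inner_nonneg_left x

lemma IsPositive.bddBelow_range_reApplyInnerSelf {𝕜 E ι : Type*} [RCLike 𝕜]
    [NormedAddCommGroup E] [InnerProductSpace 𝕜 E] {T : E →L[𝕜] E} (hT : T.IsPositive)
    (x : ι → E) : BddBelow (Set.range fun i => T.reApplyInnerSelf (x i)) :=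
  ⟨0, Set.forall_mem_range.mpr fun i => hT.re_inner_nonneg_left (x i)⟩

lemma IsPositive.norm_apply_sq_le {T : H →L[ℂ] H} (hT : T.IsPositive) (x : H) :
    ‖T x‖ ^ 2 ≤ ‖T‖ * T.reApplyInnerSelf x := by
  have hT0 : 0 ≤ T := (nonneg_iff_isPositive T).mpr hT
  set R := CFC.sqrt T
  have hR : IsSelfAdjoint R := (CFC.sqrt_nonneg T).isSelfAdjoint
  have hRR : R ∘L R = T := CFC.sqrt_mul_sqrt_self T
  have hRx : ‖R x‖ ^ 2 = T.reApplyInnerSelf x := by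
    rw [apply_norm_sq_eq_inner_adjoint_left, hR.adjoint_eq, hRR]; rfl
  calc ‖T x‖ ^ 2 = ‖R (R x)‖ ^ 2 := by rw [← hRR]; rfl
    _ ≤ (‖R‖ * ‖R x‖) ^ 2 := by gcongr; exact R.le_opNorm _
    _ = ‖T‖ * T.reApplyInnerSelf x := by
      rw [mul_pow, CFC.norm_sqrt T, Real.sq_sqrt (norm_nonneg _), hRx]

lemma tendsto_apply_zero_of_tendsto_reApplyInnerSelf {ι : Type*} {l : Filter ι}
    {T : ι → H →L[ℂ] H} {C : ℝ} (hT : ∀ i, (T i).IsPositive) (hC : ∀ i, ‖T i‖ ≤ C) {x : H}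
    (hx : Tendsto (fun i => (T i).reApplyInnerSelf x) l (𝓝 0)) :
    Tendsto (fun i => T i x) l (𝓝 0) := by
  have hbound : ∀ i, ‖T i x‖ ≤ √(C * (T i).reApplyInnerSelf x) := fun i =>
    Real.le_sqrt_of_sq_le <| (hT i).norm_apply_sq_le x |>.trans <|
      mul_le_mul_of_nonneg_right (hC i) ((hT i).re_inner_nonneg_left x)
  have hlim : Tendsto (fun i => √(C * (T i).reApplyInnerSelf x)) l (𝓝 0) := by
    simpa using ((hx.const_mul C).sqrt)
  exact tendsto_zero_iff_norm_tendsto_zero.mpr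
    (squeeze_zero (fun _ => norm_nonneg _) hbound hlim)

lemma tendsto_apply_of_antitone_of_tendsto_reApplyInnerSelf {T : ℕ → H →L[ℂ] H}
    {T' : H →L[ℂ] H} (hT : Antitone T) (hle : ∀ n, T' ≤ T n) {x : H}
    (hx : Tendsto (fun n => (T n).reApplyInnerSelf x) atTop (𝓝 (T'.reApplyInnerSelf x))) :
    Tendsto (fun n => T n x) atTop (𝓝 (T' x)) := by
  have hD : Tendsto (fun n => (T n - T') x) atTop (𝓝 0) :=
    tendsto_apply_zero_of_tendsto_reApplyInnerSelf hle
      (fun n => CStarAlgebra.norm_le_norm_of_nonneg_of_le (sub_nonneg.mpr (hle n))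
        (sub_le_sub_right (hT n.zero_le) _))
      (by simpa [reApplyInnerSelf_apply, inner_sub_left] using
        hx.sub_const (T'.reApplyInnerSelf x))
  simpa using hD.add_const (T' x)

end ContinuousLinearMap

lemma Real.tendsto_iInf_of_antitone {ι : Type*} [Nonempty ι] {a : ℕ → ι → ℝ} {b : ι → ℝ}
    (ha : ∀ i, Antitone (a · i)) (hab : ∀ i, Tendsto (a · i) atTop (𝓝 (b i)))
    (hb : BddBelow (Set.range b)) :
    Tendsto (fun n => ⨅ i, a n i) atTop (𝓝 (⨅ i, b i)) := by
  have hba : ∀ n i, b i ≤ a n i := fun n i => (ha i).le_of_tendsto (hab i) n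
  have hbdd : ∀ n, BddBelow (Set.range (a n)) := fun n =>
    let ⟨c, hc⟩ := hb
    ⟨c, Set.forall_mem_range.mpr fun i => (hc ⟨i, rfl⟩).trans (hba n i)⟩
  have hlower : ∀ n, ⨅ i, b i ≤ ⨅ i, a n i := fun n =>
    ciInf_mono hb (hba n)
  have hanti : Antitone fun n => ⨅ i, a n i := fun m n hmn =>
    ciInf_mono (hbdd n) fun i => ha i hmn
  have hbdd' : BddBelow (Set.range fun n => ⨅ i, a n i) :=
    ⟨⨅ i, b i, Set.forall_mem_range.mpr hlower⟩
  have hlim : ⨅ n, ⨅ i, a n i = ⨅ i, b i :=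
    le_antisymm (le_ciInf fun i => ge_of_tendsto' (hab i) fun n =>
      (ciInf_le hbdd' n).trans (ciInf_le (hbdd n) i)) (le_ciInf hlower)
  exact hlim ▸ tendsto_atTop_ciInf hanti hbdd'

namespace IsShortedOp

variable {S S' W W' : H →L[ℂ] H} {K : Submodule ℂ H}

lemma reApplyInnerSelf_eq (hW : IsShortedOp S W K) (f : H) :
    W.reApplyInnerSelf f = ⨅ φ : Kᗮ, S.reApplyInnerSelf (f + φ) :=
  hW.2 f

lemma mono (hW : IsShortedOp S W K) (hW' : IsShortedOp S' W' K) (hS : S.IsPositive)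
    (hSS' : S ≤ S') : W ≤ W' := by
  refine isPositive_def'.mpr ⟨hW'.1.sub hW.1, fun f => ?_⟩
  have : W.reApplyInnerSelf f ≤ W'.reApplyInnerSelf f := by
    rw [hW.reApplyInnerSelf_eq, hW'.reApplyInnerSelf_eq]
    exact ciInf_mono (hS.bddBelow_range_reApplyInnerSelf _) fun φ =>
      reApplyInnerSelf_le_of_le hSS' _
  simpa [reApplyInnerSelf_apply, inner_sub_left] using this

lemma tendsto_reApplyInnerSelf {S W : ℕ → H →L[ℂ] H} {Slim Wlim : H →L[ℂ] H}
    (hS : Antitone S) (hconv : ∀ f, Tendsto (fun n => S n f) atTop (𝓝 (Slim f)))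
    (hSlim : Slim.IsPositive) (hW : ∀ n, IsShortedOp (S n) (W n) K)
    (hWlim : IsShortedOp Slim Wlim K) (f : H) :
    Tendsto (fun n => (W n).reApplyInnerSelf f) atTop (𝓝 (Wlim.reApplyInnerSelf f)) := by
  simp only [fun n => (hW n).reApplyInnerSelf_eq f, hWlim.reApplyInnerSelf_eq f]
  exact Real.tendsto_iInf_of_antitone (fun _ _ _ hmn => reApplyInnerSelf_le_of_le (hS hmn) _)
    (fun _ => (Complex.continuous_re.tendsto _).comp ((hconv _).inner tendsto_const_nhds))
    (hSlim.bddBelow_range_reApplyInnerSelf _)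

end IsShortedOp

theorem shorted_strong_limit_general (S : ℕ → (H →L[ℂ] H)) (Slim : H →L[ℂ] H)
    (hpos : ∀ n, (S n).IsPositive)
    (hmono : ∀ n, (S n - S (n + 1)).IsPositive)
    (hconv : ∀ f : H, Filter.Tendsto (fun n => S n f) Filter.atTop (nhds (Slim f)))
    (K : Submodule ℂ H)
    (W : ℕ → (H →L[ℂ] H)) (Wlim : H →L[ℂ] H)
    (hW : ∀ n, IsShortedOp (S n) (W n) K) (hWlim : IsShortedOp Slim Wlim K) :
    ∀ f : H, Filter.Tendsto (fun n => W n f) Filter.atTop (nhds (Wlim f)) := by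
  have hS : Antitone S := antitone_nat_of_succ_le hmono
  have hSlim : Slim.IsPositive := .of_tendsto_apply (.of_forall hpos) hconv
  have hW_anti : Antitone W := fun m n hmn => (hW n).mono (hW m) (hpos n) (hS hmn)
  have hWlim_le : ∀ n, Wlim ≤ W n := fun n =>
    hWlim.mono (hW n) hSlim (le_of_antitone_of_tendsto_apply hS hconv n)
  exact fun f => tendsto_apply_of_antitone_of_tendsto_reApplyInnerSelf hW_anti hWlim_le
    (IsShortedOp.tendsto_reApplyInnerSelf hS hconv hSlim hW hWlim f)

/-- If `{Sₙ}` is a non-increasing sequence of nonnegative bounded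
self-adjoint operators converging strongly to `S`, and `K` is a closed subspace,
then `(Sₙ)_K` converges strongly to `S_K`. -/
theorem shorted_strong_limit (S : ℕ → (H →L[ℂ] H)) (Slim : H →L[ℂ] H)
    (hpos : ∀ n, (S n).IsPositive)
    (hmono : ∀ n, (S n - S (n + 1)).IsPositive)
    (hconv : ∀ f : H, Filter.Tendsto (fun n => S n f) Filter.atTop (nhds (Slim f)))
    (K : Submodule ℂ H) (hK : IsClosed (K : Set H))
    (W : ℕ → (H →L[ℂ] H)) (Wlim : H →L[ℂ] H)
    (hW : ∀ n, IsShortedOp (S n) (W n) K) (hWlim : IsShortedOp Slim Wlim K) :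
    ∀ f : H, Filter.Tendsto (fun n => W n f) Filter.atTop (nhds (Wlim f)) :=
  shorted_strong_limit_general S Slim hpos hmono hconv K W Wlim hW hWlim
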